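/- Let f, g : ℝ → ℝ be nondecreasing functions with f(r) > 0 and g(r) > 0 for all r ∈ [0, 1/12]. Let L > 0 and K > 0 be real numbers with ln ln ( e·f(1/12)/f(0) ) ≤ L and ln ( g(1/12)/g(0) ) ≤ K. Then there exists r ∈ [0, 1/12] such that both f and g are differentiable at r and simultaneously f'(r) ≤ 48 · L · ln( e·f(1/12)/f(r) ) · f(r) and g'(r) ≤ 48 · K · g(r). -/

import Mathlib

/-!
If `ψ` is monotone on `[a, b]` then `∫ₐᵇ ψ' ≤ ψ b - ψ a`, so by Markov's inequality `ψ' ≥ c` on a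
set of measure at most `(ψ b - ψ a) / c`. The functions `ψ_f = -log log (e f(1/12) / f)` and
`ψ_g = log g` increase by at most `L` and `K` on `[0, 1/12]`, so `ψ_f' ≥ 48 L` and `ψ_g' ≥ 48 K`
each hold on a set of measure at most `1/48`, and `2/48 < 1/12`. As `f` and `g` are differentiable
almost everywhere, some radius avoids both bad sets, and there the chain rule turns `ψ_f' < 48 L`
and `ψ_g' < 48 K` into the two bounds.
-/

open Real Set MeasureTheory

theorem MonotoneOn.volume_setOf_le_deriv_le {ψ : ℝ → ℝ} {a b c : ℝ} (hψ : MonotoneOn ψ (Icc a b))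
    (hc : 0 < c) : volume {x ∈ Ioo a b | c ≤ deriv ψ x} ≤ ENNReal.ofReal ((ψ b - ψ a) / c) := by
  rcases lt_or_ge b a with hba | hab
  · simp [Ioo_eq_empty_of_le hba.le]
  have hmono : 0 ≤ ψ b - ψ a := sub_nonneg.2 (hψ (left_mem_Icc.2 hab) (right_mem_Icc.2 hab) hab)
  have hψ' : MonotoneOn ψ (uIcc a b) := uIcc_of_le hab ▸ hψ
  have hint : IntegrableOn (deriv ψ) (Ioo a b) :=
    hψ'.intervalIntegrable_deriv.1.mono_set Ioo_subset_Ioc_self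
  have hnonneg : 0 ≤ᵐ[volume.restrict (Ioo a b)] deriv ψ := by
    refine (ae_restrict_iff' measurableSet_Ioo).2 (.of_forall fun x hx => ?_)
    rw [← derivWithin_of_mem_nhds (Icc_mem_nhds hx.1 hx.2)]
    exact hψ.derivWithin_nonneg
  have hI : ∫ x in Ioo a b, deriv ψ x ≤ ψ b - ψ a := by
    rw [← integral_Ioc_eq_integral_Ioo, ← intervalIntegral.integral_of_le hab]
    exact hψ'.intervalIntegral_deriv_mem_uIcc.2.trans (max_le hmono le_rfl)
  have hmarkov := mul_meas_ge_le_integral_of_nonneg hnonneg hint c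
  rw [measureReal_restrict_apply₀
    (measurableSet_le measurable_const (measurable_deriv ψ)).nullMeasurableSet, inter_comm]
    at hmarkov
  have hfin : volume {x ∈ Ioo a b | c ≤ deriv ψ x} ≠ ⊤ :=
    ((measure_mono inter_subset_left).trans_lt measure_Ioo_lt_top).ne
  rw [ENNReal.le_ofReal_iff_toReal_le hfin (div_nonneg hmono hc.le), le_div_iff₀ hc]
  exact (mul_comm _ c ▸ hmarkov).trans hI

theorem exists_mem_Ioo_deriv_lt_of_monotoneOn {ψ₁ ψ₂ : ℝ → ℝ} {P : ℝ → Prop} {a b c₁ c₂ : ℝ}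
    (hab : a ≤ b) (hψ₁ : MonotoneOn ψ₁ (Icc a b)) (hψ₂ : MonotoneOn ψ₂ (Icc a b))
    (hc₁ : 0 < c₁) (hc₂ : 0 < c₂) (hP : ∀ᵐ x, P x)
    (hsum : (ψ₁ b - ψ₁ a) / c₁ + (ψ₂ b - ψ₂ a) / c₂ < b - a) :
    ∃ x ∈ Ioo a b, P x ∧ deriv ψ₁ x < c₁ ∧ deriv ψ₂ x < c₂ := by
  by_contra! hbad
  have hcover : Ioo a b ≤ᵐ[volume]
      ({x ∈ Ioo a b | c₁ ≤ deriv ψ₁ x} ∪ {x ∈ Ioo a b | c₂ ≤ deriv ψ₂ x} : Set ℝ) := by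
    filter_upwards [hP] with x hPx hx
    rcases lt_or_ge (deriv ψ₁ x) c₁ with h₁ | h₁
    · exact Or.inr ⟨hx, hbad x hx hPx h₁⟩
    · exact Or.inl ⟨hx, h₁⟩
  have hnonneg₁ : 0 ≤ (ψ₁ b - ψ₁ a) / c₁ :=
    div_nonneg (sub_nonneg.2 (hψ₁ (left_mem_Icc.2 hab) (right_mem_Icc.2 hab) hab)) hc₁.le
  have hnonneg₂ : 0 ≤ (ψ₂ b - ψ₂ a) / c₂ :=
    div_nonneg (sub_nonneg.2 (hψ₂ (left_mem_Icc.2 hab) (right_mem_Icc.2 hab) hab)) hc₂.le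
  have hvol : ENNReal.ofReal (b - a) ≤
      ENNReal.ofReal ((ψ₁ b - ψ₁ a) / c₁ + (ψ₂ b - ψ₂ a) / c₂) := calc
    ENNReal.ofReal (b - a) = volume (Ioo a b) := Real.volume_Ioo.symm
    _ ≤ volume {x ∈ Ioo a b | c₁ ≤ deriv ψ₁ x} + volume {x ∈ Ioo a b | c₂ ≤ deriv ψ₂ x} :=
      (measure_mono_ae hcover).trans (measure_union_le _ _)
    _ ≤ ENNReal.ofReal ((ψ₁ b - ψ₁ a) / c₁) + ENNReal.ofReal ((ψ₂ b - ψ₂ a) / c₂) := by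
      gcongr
      · exact hψ₁.volume_setOf_le_deriv_le hc₁
      · exact hψ₂.volume_setOf_le_deriv_le hc₂
    _ = ENNReal.ofReal ((ψ₁ b - ψ₁ a) / c₁ + (ψ₂ b - ψ₂ a) / c₂) := by
      rw [ENNReal.ofReal_add hnonneg₁ hnonneg₂]
  linarith [(ENNReal.ofReal_le_ofReal_iff (by linarith)).1 hvol]

theorem MonotoneOn.neg_log_log_div {f : ℝ → ℝ} {s : Set ℝ} {A : ℝ} (hf : MonotoneOn f s)
    (hpos : ∀ x ∈ s, 0 < f x) (hlt : ∀ x ∈ s, f x < A) :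
    MonotoneOn (fun x => -log (log (A / f x))) s := by
  intro x hx y hy hxy
  have hAy : 1 < A / f y := (one_lt_div (hpos y hy)).2 (hlt y hy)
  refine neg_le_neg (log_le_log (log_pos hAy) (log_le_log (one_pos.trans hAy) ?_))
  exact div_le_div_of_nonneg_left ((hpos y hy).trans (hlt y hy)).le (hpos x hx) (hf hx hy hxy)

theorem MonotoneOn.log {f : ℝ → ℝ} {s : Set ℝ} (hf : MonotoneOn f s) (hpos : ∀ x ∈ s, 0 < f x) :
    MonotoneOn (fun x => Real.log (f x)) s :=
  fun x hx _ hy hxy => Real.log_le_log (hpos x hx) (hf hx hy hxy)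

theorem HasDerivAt.neg_log_log_div {f : ℝ → ℝ} {f' A x : ℝ} (hf : HasDerivAt f f' x)
    (hA : A ≠ 0) (hfx : f x ≠ 0) (hlog : Real.log (A / f x) ≠ 0) :
    HasDerivAt (fun y => -Real.log (Real.log (A / f y))) (f' / (f x * Real.log (A / f x))) x := by
  refine ((((hasDerivAt_const x A).div hf hfx).log (div_ne_zero hA hfx)).log hlog).neg
    |>.congr_deriv ?_
  simp only [Pi.div_apply]
  field_simp
  ring

/-- Abstract core of the Region Growing Lemma (Lemma 4.3): there is a radius
`r ∈ [0, 1/12]` that is simultaneously `x`-good and `y`-good. -/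
theorem exists_good_radius (f g : ℝ → ℝ) (hf : Monotone f) (hg : Monotone g)
    (hfpos : ∀ r ∈ Set.Icc (0 : ℝ) (1 / 12), 0 < f r)
    (hgpos : ∀ r ∈ Set.Icc (0 : ℝ) (1 / 12), 0 < g r)
    (L K : ℝ) (hL : 0 < L) (hK : 0 < K)
    (hfL : Real.log (Real.log (Real.exp 1 * f (1 / 12) / f 0)) ≤ L)
    (hgK : Real.log (g (1 / 12) / g 0) ≤ K) :
    ∃ r ∈ Set.Icc (0 : ℝ) (1 / 12), DifferentiableAt ℝ f r ∧ DifferentiableAt ℝ g r ∧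
      deriv f r ≤ 48 * L * Real.log (Real.exp 1 * f (1 / 12) / f r) * f r ∧
      deriv g r ≤ 48 * K * g r := by
  have h₀ : (0 : ℝ) ∈ Icc 0 (1 / 12) := ⟨le_rfl, by norm_num⟩
  have h₁ : (1 / 12 : ℝ) ∈ Icc 0 (1 / 12) := ⟨by norm_num, le_rfl⟩
  set A := exp 1 * f (1 / 12)
  have hA : 0 < A := mul_pos (exp_pos 1) (hfpos _ h₁)
  have hfA : ∀ r ∈ Icc (0 : ℝ) (1 / 12), f r < A := fun r hr =>
    (hf hr.2).trans_lt (lt_mul_left (hfpos _ h₁) (one_lt_exp_iff.2 one_pos))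
  have hincr_f : (-log (log (A / f (1 / 12))) - -log (log (A / f 0))) / (48 * L) ≤ 1 / 48 := by
    rw [div_le_iff₀ (by positivity), mul_div_cancel_right₀ _ (hfpos _ h₁).ne', log_exp, log_one]
    linarith
  have hincr_g : (log (g (1 / 12)) - log (g 0)) / (48 * K) ≤ 1 / 48 := by
    rw [div_le_iff₀ (by positivity), ← log_div (hgpos _ h₁).ne' (hgpos _ h₀).ne']
    linarith
  obtain ⟨r, hr, ⟨hdf, hdg⟩, hψf, hψg⟩ :=
    exists_mem_Ioo_deriv_lt_of_monotoneOn (c₁ := 48 * L) (c₂ := 48 * K) (by norm_num)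
      ((hf.monotoneOn _).neg_log_log_div hfpos hfA) ((hg.monotoneOn _).log hgpos)
      (by positivity) (by positivity) (hf.ae_differentiableAt.and hg.ae_differentiableAt)
      (by linarith)
  have hr' : r ∈ Icc (0 : ℝ) (1 / 12) := Ioo_subset_Icc_self hr
  refine ⟨r, hr', hdf, hdg, ?_, ?_⟩
  · have hu : 0 < log (A / f r) := log_pos ((one_lt_div (hfpos r hr')).2 (hfA r hr'))
    rw [(hdf.hasDerivAt.neg_log_log_div hA.ne' (hfpos r hr').ne' hu.ne').deriv,
      div_lt_iff₀ (mul_pos (hfpos r hr') hu)] at hψf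
    linarith
  · rw [(hdg.hasDerivAt.log (hgpos r hr').ne').deriv, div_lt_iff₀ (hgpos r hr')] at hψg
    linarith
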